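/- (Approximate greedy guarantee) Under the grounded Laplacian setup, let k be a positive integer with k ≤ |Q| and let 0 < ε < 1/2. Suppose T₀ = ∅ and, for 0 ≤ i < k, T_{i+1} = T_i ∪ {e_i} for some e_i ∈ Q \ T_i satisfying H(T_i ∪ {e_i}) − H(T_i) ≥ (1−ε) · max_{e ∈ Q \ T_i} (H(T_i ∪ {e}) − H(T_i)). Then H(T_k) − H(∅) ≥ (1 − 1/e − ε) · (H(T*) − H(∅)), where T* maximizes H over all subsets P ⊆ Q with |P| = k, and e is Euler's number. -/

import Mathlib

/-!
Put `r = L_F 𝟏 - b`; it is nonnegative because `(L_F 𝟏)_i` counts the neighbours of `i` outside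
`F`, among them its neighbours in `S₁`. As `b + c_P = (L_F + diag c_P) 𝟏 - r`, we get
`H(P) = |F| - 𝟏ᵀ (L_F + diag c_P)⁻¹ r`, and adding an edge `(a, i)` raises the `i`-th diagonal
entry by one. For a positive definite Z-matrix `M` (nonpositive off the diagonal) the
Sherman–Morrison formula gives the gain `(M⁻¹ 𝟏)_i (M⁻¹ r)_i / (1 + (M⁻¹)_ii)`. A minimum
principle for such `M` makes `M⁻¹` entrywise nonnegative and yields the path-product inequality
`(M⁻¹)_ij (M⁻¹ g)_j ≤ (M⁻¹)_jj (M⁻¹ g)_i` for `g ≥ 0`; together they show that the gain is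
nonnegative and shrinks when another diagonal entry grows. So `H` is monotone and submodular on
the subsets of `Q`, and the usual analysis of the `(1 - ε)`-approximate greedy rule shrinks the gap
`H(T*) - H(T_j)` by a factor `1 - (1 - ε)/k` per step, with `(1 - (1 - ε)/k)^k ≤ e^(ε-1) ≤ 1/e + ε`.
-/

open Matrix Finset

namespace Matrix

def IsZMatrix {ι : Type*} (M : Matrix ι ι ℝ) : Prop := ∀ i j, i ≠ j → M i j ≤ 0

variable {ι : Type*} {M : Matrix ι ι ℝ}

lemma IsZMatrix.submatrix {κ : Type*} (hZ : M.IsZMatrix) {e : κ → ι}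
    (he : Function.Injective e) : (M.submatrix e e).IsZMatrix :=
  fun i j hij => hZ (e i) (e j) (he.ne hij)

/-- Minimum principle. For the negative part `p` of `v`, `pᵀ M p = pᵀ M (v + p) - pᵀ M v ≤ 0`,
because `p` and `v + p ≥ 0` have disjoint supports and `M` is nonpositive off the diagonal. -/
lemma IsZMatrix.nonneg_of_mulVec_nonneg_of_neg [Fintype ι] (hZ : M.IsZMatrix)
    (hM : M.PosDef) {v : ι → ℝ} (hv : ∀ k, v k < 0 → 0 ≤ (M *ᵥ v) k) :
    0 ≤ v := by
  set p : ι → ℝ := fun k => max (-v k) 0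
  set q : ι → ℝ := v + p
  have hp : 0 ≤ p := fun k => le_max_right _ _
  have hq : 0 ≤ q := fun k => by
    simp only [q, p, Pi.add_apply, Pi.zero_apply]; linarith [le_max_left (-v k) 0]
  have hpq : ∀ k, p k * q k = 0 := fun k => by
    rcases le_total (v k) 0 with h | h
    · simp [q, p, max_eq_left (neg_nonneg.mpr h)]
    · simp [p, max_eq_right (neg_nonpos.mpr h)]
  have hMq : p ⬝ᵥ (M *ᵥ q) ≤ 0 := by
    simp only [dotProduct, mulVec, Finset.mul_sum]
    refine Finset.sum_nonpos fun k _ => Finset.sum_nonpos fun l _ => ?_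
    rcases eq_or_ne k l with rfl | hkl
    · rw [mul_left_comm, hpq, mul_zero]
    · rw [mul_left_comm]
      exact mul_nonpos_of_nonpos_of_nonneg (hZ k l hkl) (mul_nonneg (hp k) (hq l))
  have hMv : 0 ≤ p ⬝ᵥ (M *ᵥ v) := Finset.sum_nonneg fun k _ => by
    rcases lt_or_ge (v k) 0 with h | h
    · exact mul_nonneg (hp k) (hv k h)
    · simp [p, max_eq_right (neg_nonpos.mpr h)]
  have hp0 : p = 0 := by
    by_contra hne
    have hpos := hM.dotProduct_mulVec_pos hne
    have hqv : p = q - v := by simp [q]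
    rw [star_trivial, hqv, mulVec_sub, dotProduct_sub, ← hqv] at hpos
    linarith
  intro k
  simpa [p] using congrFun hp0 k

variable [DecidableEq ι]

lemma IsZMatrix.add_diagonal (hZ : M.IsZMatrix) (d : ι → ℝ) : (M + diagonal d).IsZMatrix :=
  fun i j hij => by simpa [diagonal_apply_ne _ hij] using hZ i j hij

lemma PosDef.add_diagonal (hM : M.PosDef) {d : ι → ℝ} (hd : 0 ≤ d) : (M + diagonal d).PosDef :=
  hM.add_posSemidef (PosSemidef.diagonal hd)

variable [Fintype ι]

namespace PosDef

variable (hM : M.PosDef)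
include hM

lemma mulVec_inv_mulVec (g : ι → ℝ) : M *ᵥ (M⁻¹ *ᵥ g) = g := by
  rw [mulVec_mulVec, mul_nonsing_inv _ ((isUnit_iff_isUnit_det M).mp hM.isUnit), one_mulVec]

lemma inv_mulVec_eq_of_mulVec_eq {v g : ι → ℝ} (h : M *ᵥ v = g) : M⁻¹ *ᵥ g = v := by
  rw [← h, mulVec_mulVec, nonsing_inv_mul _ ((isUnit_iff_isUnit_det M).mp hM.isUnit), one_mulVec]

lemma inv_apply_comm (i j : ι) : M⁻¹ i j = M⁻¹ j i := by
  simpa using (hM.inv.isHermitian.apply i j).symm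

/-- Sherman–Morrison formula for the rank-one update `M + eⱼ eⱼᵀ`. -/
lemma inv_add_diagonal_single_mulVec (j : ι) (g : ι → ℝ) :
    (M + diagonal (Pi.single j 1))⁻¹ *ᵥ g
      = M⁻¹ *ᵥ g - ((M⁻¹ *ᵥ g) j / (1 + M⁻¹ j j)) • M⁻¹.col j := by
  have hα : 1 + M⁻¹ j j ≠ 0 := (add_pos one_pos hM.inv.diag_pos).ne'
  apply (hM.add_diagonal (Pi.single_nonneg.mpr zero_le_one)).inv_mulVec_eq_of_mulVec_eq
  rw [← mulVec_single_one, add_mulVec, mulVec_sub, mulVec_smul, hM.mulVec_inv_mulVec,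
    hM.mulVec_inv_mulVec]
  ext k
  rcases eq_or_ne k j with rfl | hkj
  · simp [mulVec_diagonal]
    field_simp
    ring
  · simp [mulVec_diagonal, hkj]

lemma inv_add_diagonal_single_mulVec_apply (j : ι) (g : ι → ℝ) (i : ι) :
    ((M + diagonal (Pi.single j 1))⁻¹ *ᵥ g) i
      = (M⁻¹ *ᵥ g) i - (M⁻¹ *ᵥ g) j / (1 + M⁻¹ j j) * M⁻¹ i j := by
  simp [hM.inv_add_diagonal_single_mulVec]

lemma inv_add_diagonal_single_apply_self (i j : ι) :
    (M + diagonal (Pi.single j 1) : Matrix ι ι ℝ)⁻¹ i i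
      = M⁻¹ i i - M⁻¹ i j / (1 + M⁻¹ j j) * M⁻¹ i j := by
  simpa [mulVec_single_one, hM.inv_apply_comm j i] using
    hM.inv_add_diagonal_single_mulVec_apply j (Pi.single i 1) i

end PosDef

lemma dotProduct_inv_add_diagonal_mulVec_add {d : ι → ℝ} (hN : (M + diagonal d).PosDef)
    (u b : ι → ℝ) :
    u ⬝ᵥ ((M + diagonal d)⁻¹ *ᵥ (b + d))
      = u ⬝ᵥ 1 - u ⬝ᵥ ((M + diagonal d)⁻¹ *ᵥ (M *ᵥ 1 - b)) := by
  have hbd : b + d = (M + diagonal d) *ᵥ 1 - (M *ᵥ 1 - b) := by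
    ext k
    simp [add_mulVec, mulVec_diagonal]
    ring
  rw [hbd, mulVec_sub, hN.inv_mulVec_eq_of_mulVec_eq rfl, dotProduct_sub]

noncomputable def shiftGain (M : Matrix ι ι ℝ) (u r : ι → ℝ) (i : ι) : ℝ :=
  u ⬝ᵥ (M⁻¹ *ᵥ r) - u ⬝ᵥ ((M + diagonal (Pi.single i 1))⁻¹ *ᵥ r)

lemma PosDef.shiftGain_eq (hM : M.PosDef) (u r : ι → ℝ) (i : ι) :
    shiftGain M u r i = (M⁻¹ *ᵥ u) i * (M⁻¹ *ᵥ r) i / (1 + M⁻¹ i i) := by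
  have hcol : u ⬝ᵥ M⁻¹.col i = (M⁻¹ *ᵥ u) i := by
    simp only [dotProduct, col_apply, mulVec, hM.inv_apply_comm _ i, mul_comm]
  rw [shiftGain, hM.inv_add_diagonal_single_mulVec, dotProduct_sub, dotProduct_smul, hcol,
    smul_eq_mul]
  ring

namespace IsZMatrix

variable (hZ : M.IsZMatrix) (hM : M.PosDef)
include hZ hM

lemma inv_mulVec_nonneg {g : ι → ℝ} (hg : 0 ≤ g) : 0 ≤ M⁻¹ *ᵥ g :=
  hZ.nonneg_of_mulVec_nonneg_of_neg hM fun k _ => by rw [hM.mulVec_inv_mulVec]; exact hg k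

lemma inv_apply_nonneg (i j : ι) : 0 ≤ M⁻¹ i j := by
  simpa [mulVec_single_one] using
    hZ.inv_mulVec_nonneg hM (Pi.single_nonneg.mpr zero_le_one) i

lemma inv_apply_mul_inv_mulVec_le {g : ι → ℝ} (hg : 0 ≤ g) (i j : ι) :
    M⁻¹ i j * (M⁻¹ *ᵥ g) j ≤ M⁻¹ j j * (M⁻¹ *ᵥ g) i := by
  set v := M⁻¹ j j • (M⁻¹ *ᵥ g) - (M⁻¹ *ᵥ g) j • M⁻¹.col j
  have hMv : M *ᵥ v = M⁻¹ j j • g - (M⁻¹ *ᵥ g) j • Pi.single j 1 := by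
    rw [mulVec_sub, mulVec_smul, mulVec_smul, ← mulVec_single_one, hM.mulVec_inv_mulVec,
      hM.mulVec_inv_mulVec]
  have hv := hZ.nonneg_of_mulVec_nonneg_of_neg hM (v := v) fun k hk => by
    rcases eq_or_ne k j with rfl | hkj
    · simp [v, mul_comm] at hk
    · simpa [hMv, hkj] using mul_nonneg (hZ.inv_apply_nonneg hM j j) (hg k)
  simpa [v, sub_nonneg, mul_comm] using hv i

variable {u r : ι → ℝ} (hu : 0 ≤ u) (hr : 0 ≤ r)
include hu hr

lemma shiftGain_nonneg (i : ι) : 0 ≤ shiftGain M u r i := by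
  rw [hM.shiftGain_eq]
  have := hM.inv.diag_pos (i := i)
  exact div_nonneg (mul_nonneg (hZ.inv_mulVec_nonneg hM hu i) (hZ.inv_mulVec_nonneg hM hr i))
    (by positivity)

lemma shiftGain_add_diagonal_single_le (i j : ι) :
    shiftGain (M + diagonal (Pi.single j 1)) u r i ≤ shiftGain M u r i := by
  have hN := hM.add_diagonal (d := Pi.single j 1) (Pi.single_nonneg.mpr zero_le_one)
  have hden := add_pos one_pos (hN.inv.diag_pos (i := i))
  rw [hM.inv_add_diagonal_single_apply_self] at hden
  rw [hM.shiftGain_eq, hN.shiftGain_eq, hM.inv_add_diagonal_single_mulVec_apply,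
    hM.inv_add_diagonal_single_mulVec_apply, hM.inv_add_diagonal_single_apply_self,
    div_le_div_iff₀ hden (add_pos one_pos hM.inv.diag_pos), ← sub_nonneg]
  have hρj := hZ.inv_apply_mul_inv_mulVec_le hM hr j i
  have hρi := hZ.inv_apply_mul_inv_mulVec_le hM hr i j
  rw [hM.inv_apply_comm j i] at hρj
  have hα : 0 < 1 + M⁻¹ j j := add_pos one_pos hM.inv.diag_pos
  have hm := hM.inv.diag_pos (i := i)
  have hW : 0 ≤ M⁻¹ i j := hZ.inv_apply_nonneg hM i j
  have hs := hZ.inv_mulVec_nonneg hM hu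
  have hρ := hZ.inv_mulVec_nonneg hM hr
  set α := 1 + M⁻¹ j j with hα_def
  set W := M⁻¹ i j
  set s := M⁻¹ *ᵥ u
  set ρ := M⁻¹ *ᵥ r
  have key : s i * ρ i * (1 + (M⁻¹ i i - W / α * W)) - (s i - s j / α * W) * (ρ i - ρ j / α * W)
      * (1 + M⁻¹ i i) = (α * W * s i * ((1 + M⁻¹ i i) * ρ j - W * ρ i)
        + (1 + M⁻¹ i i) * W * s j * (α * ρ i - W * ρ j)) / α ^ 2 := by
    field_simp
    ring
  rw [key]
  have : 0 ≤ s i := hs i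
  have : 0 ≤ s j := hs j
  have : 0 ≤ ρ i := hρ i
  have : 0 ≤ ρ j := hρ j
  refine div_nonneg (add_nonneg ?_ ?_) (sq_nonneg α)
  · exact mul_nonneg (by positivity) (by linarith)
  · exact mul_nonneg (by positivity) (by linarith)

end IsZMatrix

end Matrix

lemma one_sub_div_pow_le_inv_exp_one_add {ε : ℝ} (hε0 : 0 ≤ ε) (hε1 : ε ≤ 1) {k : ℕ}
    (hk : 0 < k) : (1 - (1 - ε) / k) ^ k ≤ 1 / Real.exp 1 + ε := by
  have hk' : (1 : ℝ) ≤ k := Nat.one_le_cast.mpr hk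
  -- convexity of `exp` on `[0, 1]`: `e^ε ≤ (1 - ε) + ε e`
  have hconv := convexOn_exp.2 (Set.mem_univ 0) (Set.mem_univ 1) (sub_nonneg.mpr hε1) hε0
    (sub_add_cancel 1 ε)
  simp only [smul_eq_mul, mul_zero, mul_one, zero_add, Real.exp_zero] at hconv
  have he := Real.add_one_le_exp 1
  calc (1 - (1 - ε) / k) ^ k ≤ Real.exp (-(1 - ε)) := Real.one_sub_div_pow_le_exp_neg (by linarith)
    _ = Real.exp ε / Real.exp 1 := by rw [neg_sub, Real.exp_sub]
    _ ≤ 1 / Real.exp 1 + ε := by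
      rw [div_le_iff₀ (Real.exp_pos 1), add_mul, one_div_mul_cancel (Real.exp_pos 1).ne']
      nlinarith

section Greedy

variable {α : Type*} [DecidableEq α] {f : Finset α → ℝ} {Q : Finset α}

lemma monotoneOn_Iic_of_le_insert (h : ∀ P ⊆ Q, ∀ e ∈ Q, e ∉ P → f P ≤ f (insert e P)) :
    MonotoneOn f (Set.Iic Q) := by
  intro P _ P' hP' hPP'
  rw [Set.mem_Iic, ← union_sdiff_of_subset hPP'] at hP'
  rw [← union_sdiff_of_subset hPP']
  generalize P' \ P = R at hP' ⊢
  induction R using Finset.induction_on with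
  | empty => simp
  | insert a R _ ih =>
    rw [union_insert] at hP' ⊢
    have hPR := (subset_insert a _).trans hP'
    by_cases ha : a ∈ P ∪ R
    · rw [insert_eq_of_mem ha]
      exact ih hPR
    · exact (ih hPR).trans (h _ hPR a (hP' (mem_insert_self a _)) ha)

variable (hmon : MonotoneOn f (Set.Iic Q))
  (hsub : ∀ P ⊆ Q, ∀ a ∈ Q, a ∉ P → ∀ e ∈ Q, e ∉ insert a P →
    f (insert e (insert a P)) - f (insert a P) ≤ f (insert e P) - f P)

include hmon in
lemma MonotoneOn.apply_le_apply_insert {P : Finset α} (hP : P ⊆ Q) {e : α} (he : e ∈ Q) :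
    f P ≤ f (insert e P) :=
  hmon hP (insert_subset he hP) (subset_insert e P)

include hsub in
lemma insert_union_sub_le {P R : Finset α} (hPR : P ∪ R ⊆ Q) {e : α} (he : e ∈ Q)
    (heR : e ∉ P ∪ R) : f (insert e (P ∪ R)) - f (P ∪ R) ≤ f (insert e P) - f P := by
  induction R using Finset.induction_on with
  | empty => simp
  | insert a R _ ih =>
    rw [union_insert] at hPR heR ⊢
    have hPR' := (subset_insert a _).trans hPR
    have heR' : e ∉ P ∪ R := fun h => heR (mem_insert_of_mem h)
    by_cases ha : a ∈ P ∪ R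
    · rw [insert_eq_of_mem ha]
      exact ih hPR' heR'
    · exact (hsub _ hPR' a (hPR (mem_insert_self a _)) ha e he heR).trans (ih hPR' heR')

include hmon hsub

lemma union_sub_le_sum {P R : Finset α} (hPR : P ∪ R ⊆ Q) :
    f (P ∪ R) - f P ≤ ∑ e ∈ R, (f (insert e P) - f P) := by
  induction R using Finset.induction_on with
  | empty => simp
  | insert a R haR ih =>
    rw [union_insert] at hPR ⊢
    rw [sum_insert haR]
    have hPR' := (subset_insert a _).trans hPR
    have haQ := hPR (mem_insert_self a _)
    have hstep : f (insert a (P ∪ R)) - f (P ∪ R) ≤ f (insert a P) - f P := by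
      by_cases ha : a ∈ P ∪ R
      · rw [insert_eq_of_mem ha, sub_self, sub_nonneg]
        exact hmon.apply_le_apply_insert (subset_union_left.trans hPR') haQ
      · exact insert_union_sub_le hsub hPR' haQ ha
    linarith [ih hPR']

lemma sub_insert_le_of_approx_greedy {k : ℕ} (hk : 0 < k) {ε : ℝ} (hε : ε ≤ 1)
    {P O : Finset α} (hP : P ⊆ Q) (hO : O ⊆ Q) (hOk : #O ≤ k) {e : α} (he : e ∈ Q)
    (hgreedy : ∀ e' ∈ Q \ P, (1 - ε) * (f (insert e' P) - f P) ≤ f (insert e P) - f P) :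
    f O - f (insert e P) ≤ (1 - (1 - ε) / k) * (f O - f P) := by
  have hgain : 0 ≤ f (insert e P) - f P := sub_nonneg.mpr (hmon.apply_le_apply_insert hP he)
  have hgap : f O - f P ≤ ∑ e' ∈ O, (f (insert e' P) - f P) := by
    have hOP : f O ≤ f (P ∪ O) :=
      hmon hO (union_subset hP hO) subset_union_right
    linarith [union_sub_le_sum hmon hsub (union_subset hP hO)]
  have hterm : ∀ e' ∈ O, (1 - ε) * (f (insert e' P) - f P) ≤ f (insert e P) - f P := by
    intro e' he'
    by_cases he'P : e' ∈ P
    · rwa [insert_eq_of_mem he'P, sub_self, mul_zero]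
    · exact hgreedy e' (mem_sdiff.mpr ⟨hO he', he'P⟩)
  have hk' : (0 : ℝ) < k := Nat.cast_pos.mpr hk
  have hsum : (1 - ε) * (f O - f P) ≤ k * (f (insert e P) - f P) :=
    calc (1 - ε) * (f O - f P)
        ≤ ∑ e' ∈ O, (1 - ε) * (f (insert e' P) - f P) := by
          rw [← mul_sum]; exact mul_le_mul_of_nonneg_left hgap (sub_nonneg.mpr hε)
      _ ≤ #O * (f (insert e P) - f P) := by
          rw [← nsmul_eq_mul, ← sum_const]; exact sum_le_sum hterm
      _ ≤ k * (f (insert e P) - f P) :=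
          mul_le_mul_of_nonneg_right (Nat.cast_le.mpr hOk) hgain
  have : (1 - ε) / k * (f O - f P) ≤ f (insert e P) - f P := by
    rw [div_mul_eq_mul_div, div_le_iff₀ hk']
    linarith
  linarith

theorem approx_greedy_guarantee {k : ℕ} (hk : 0 < k) {ε : ℝ} (hε0 : 0 ≤ ε) (hε1 : ε ≤ 1)
    {T : ℕ → Finset α} (hT0 : T 0 = ∅)
    (hgreedy : ∀ i < k, ∃ e ∈ Q \ T i, T (i + 1) = insert e (T i) ∧
      ∀ e' ∈ Q \ T i, (1 - ε) * (f (insert e' (T i)) - f (T i)) ≤ f (insert e (T i)) - f (T i))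
    {O : Finset α} (hO : O ⊆ Q) (hOk : #O ≤ k) :
    (1 - 1 / Real.exp 1 - ε) * (f O - f ∅) ≤ f (T k) - f ∅ := by
  have hrate : 0 ≤ 1 - (1 - ε) / k := by
    rw [sub_nonneg, div_le_one (Nat.cast_pos.mpr hk)]
    linarith [(Nat.one_le_cast (α := ℝ)).mpr hk]
  have hiter : ∀ j ≤ k, T j ⊆ Q ∧ f O - f (T j) ≤ (1 - (1 - ε) / k) ^ j * (f O - f ∅) := by
    intro j
    induction j with
    | zero => simp [hT0]
    | succ j ih =>
      intro hj
      obtain ⟨hTj, hbound⟩ := ih (by omega)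
      obtain ⟨e, he, hTe, hgreedy_j⟩ := hgreedy j (by omega)
      have heQ := (mem_sdiff.mp he).1
      refine ⟨hTe ▸ insert_subset heQ hTj, ?_⟩
      calc f O - f (T (j + 1)) ≤ (1 - (1 - ε) / k) * (f O - f (T j)) :=
            hTe ▸ sub_insert_le_of_approx_greedy hmon hsub hk hε1 hTj hO hOk heQ hgreedy_j
        _ ≤ (1 - (1 - ε) / k) * ((1 - (1 - ε) / k) ^ j * (f O - f ∅)) :=
            mul_le_mul_of_nonneg_left hbound hrate
        _ = (1 - (1 - ε) / k) ^ (j + 1) * (f O - f ∅) := by ring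
  have hgap : 0 ≤ f O - f ∅ := sub_nonneg.mpr (hmon (empty_subset Q) hO (empty_subset O))
  have := mul_le_mul_of_nonneg_right (one_sub_div_pow_le_inv_exp_one_add hε0 hε1 hk) hgap
  linarith [(hiter k le_rfl).2]

end Greedy

namespace SimpleGraph

variable {V : Type*} [Fintype V] [DecidableEq V] (G : SimpleGraph V) [DecidableRel G.Adj]

lemma lapMatrix_apply_of_ne {i j : V} (hij : i ≠ j) :
    G.lapMatrix ℝ i j = -if G.Adj i j then 1 else 0 := by
  simp [lapMatrix, degMatrix, diagonal_apply_ne _ hij, adjMatrix_apply]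

lemma isZMatrix_lapMatrix : (G.lapMatrix ℝ).IsZMatrix := fun i j hij => by
  rw [G.lapMatrix_apply_of_ne hij, neg_nonpos]
  split_ifs <;> norm_num

lemma card_filter_adj_le_lapMatrix_submatrix_mulVec_one {F S : Finset V} (hFS : Disjoint F S)
    (i : F) : (#{a ∈ S | G.Adj a i} : ℝ)
      ≤ ((G.lapMatrix ℝ).submatrix ((↑) : F → V) ((↑) : F → V) *ᵥ 1) i := by
  have hrow : ∑ j, G.lapMatrix ℝ i j = 0 := by
    simpa [mulVec, dotProduct] using congrFun (G.lapMatrix_mulVec_const_eq_zero (R := ℝ)) i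
  have hout : ∑ j ∈ Fᶜ, G.lapMatrix ℝ i j = -∑ j ∈ Fᶜ, if G.Adj i j then (1 : ℝ) else 0 := by
    rw [← sum_neg_distrib]
    refine sum_congr rfl fun j hj => G.lapMatrix_apply_of_ne ?_
    rintro rfl
    exact mem_compl.mp hj i.2
  have hS : (#{a ∈ S | G.Adj a i} : ℝ) ≤ ∑ j ∈ Fᶜ, if G.Adj i j then (1 : ℝ) else 0 := by
    rw [← sum_boole]
    simp_rw [G.adj_comm]
    exact sum_le_sum_of_subset_of_nonneg (subset_compl_iff_disjoint_left.mpr hFS)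
      fun _ _ _ => by positivity
  have hF : ((G.lapMatrix ℝ).submatrix ((↑) : F → V) ((↑) : F → V) *ᵥ 1) i
      = ∑ j ∈ F, G.lapMatrix ℝ i j := by
    simp only [mulVec, dotProduct, submatrix_apply, Pi.one_apply, mul_one]
    exact sum_coe_sort F _
  rw [hF]
  linarith [sum_add_sum_compl F (G.lapMatrix ℝ i)]

end SimpleGraph

lemma cast_card_filter_snd_insert {V : Type*} [DecidableEq V] {F : Finset V}
    {P : Finset (V × V)} {e : V × V} (heP : e ∉ P) (he : e.2 ∈ F) :
    (fun i : F => (#{x ∈ insert e P | x.2 = (i : V)} : ℝ))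
      = (fun i : F => (#{x ∈ P | x.2 = (i : V)} : ℝ)) + Pi.single ⟨e.2, he⟩ 1 := by
  ext i
  rw [filter_insert, Pi.add_apply]
  by_cases h : e.2 = (i : V)
  · rw [if_pos h, card_insert_of_notMem fun hmem => heP (mem_filter.mp hmem).1,
      (Subtype.ext h.symm : i = ⟨e.2, he⟩), Pi.single_eq_same]
    push_cast
    rfl
  · rw [if_neg h, Pi.single_eq_of_ne fun hi => h (congrArg Subtype.val hi).symm, add_zero]

theorem stmt16_general {V : Type} [Fintype V] [DecidableEq V]
    (G : SimpleGraph V) [DecidableRel G.Adj]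
    (F S1 : Finset V)
    (hFS1 : Disjoint F S1)
    (LF : Matrix F F ℝ)
    (hLF : LF = (G.lapMatrix ℝ).submatrix (fun i : F => (i : V)) (fun i : F => (i : V)))
    (hPD : LF.PosDef)
    (b : F → ℝ)
    (hb : ∀ i : F, b i = ((S1.filter fun a => G.Adj a (i : V)).card : ℝ))
    (Q : Finset (V × V))
    (hQ : ∀ e ∈ Q, e.1 ∈ S1 ∧ e.2 ∈ F ∧ ¬ G.Adj e.1 e.2)
    (c : Finset (V × V) → F → ℝ)
    (hc : ∀ P, ∀ i : F, c P i = ((P.filter fun e => e.2 = (i : V)).card : ℝ))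
    (H : Finset (V × V) → ℝ)
    (hH : ∀ P ⊆ Q, H P = (1 : F → ℝ) ⬝ᵥ ((LF + Matrix.diagonal (c P))⁻¹ *ᵥ (b + c P)))
    (k : ℕ) (hk0 : 0 < k)
    (ε : ℝ) (hε0 : 0 < ε) (hε : ε < 1 / 2)
    (T : ℕ → Finset (V × V)) (hT0 : T 0 = ∅)
    (hgreedy : ∀ i < k, ∃ e ∈ Q \ T i,
        T (i + 1) = insert e (T i) ∧
        ∀ e' ∈ Q \ T i,
          (1 - ε) * (H (insert e' (T i)) - H (T i)) ≤ H (insert e (T i)) - H (T i))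
    (Tstar : Finset (V × V)) (hTstarQ : Tstar ⊆ Q) (hTstarcard : Tstar.card = k) :
    (1 - 1 / Real.exp 1 - ε) * (H Tstar - H ∅) ≤ H (T k) - H ∅ := by
  set r := LF *ᵥ 1 - b
  have hZ : LF.IsZMatrix := hLF ▸ G.isZMatrix_lapMatrix.submatrix Subtype.val_injective
  have hr : 0 ≤ r := fun i => by
    simpa [r, hb, hLF] using G.card_filter_adj_le_lapMatrix_submatrix_mulVec_one hFS1 i
  have hc0 (P) : 0 ≤ c P := fun i => by rw [hc]; positivity
  have hHr : ∀ P ⊆ Q, H P = 1 ⬝ᵥ 1 - 1 ⬝ᵥ ((LF + diagonal (c P))⁻¹ *ᵥ r) := fun P hP =>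
    (hH P hP).trans (dotProduct_inv_add_diagonal_mulVec_add (hPD.add_diagonal (hc0 P)) 1 b)
  have hcins : ∀ P, ∀ e ∉ P, (he : e.2 ∈ F) →
      LF + diagonal (c (insert e P)) = LF + diagonal (c P) + diagonal (Pi.single ⟨e.2, he⟩ 1) :=
    fun P e heP he => by
      rw [funext (hc _), funext (hc P), cast_card_filter_snd_insert heP he, add_assoc,
        diagonal_add]
      rfl
  have hgain : ∀ P ⊆ Q, ∀ e, (he : e ∈ Q) → e ∉ P → H (insert e P) - H P
      = shiftGain (LF + diagonal (c P)) 1 r ⟨e.2, (hQ e he).2.1⟩ := by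
    intro P hP e he heP
    rw [hHr _ (insert_subset he hP), hHr P hP, hcins P e heP (hQ e he).2.1, shiftGain]
    ring
  have hmono : MonotoneOn H (Set.Iic Q) := monotoneOn_Iic_of_le_insert fun P hP e he heP =>
    sub_nonneg.mp <| hgain P hP e he heP ▸ (hZ.add_diagonal _).shiftGain_nonneg
      (hPD.add_diagonal (hc0 P)) (fun _ => zero_le_one) hr _
  have hsub : ∀ P ⊆ Q, ∀ a ∈ Q, a ∉ P → ∀ e ∈ Q, e ∉ insert a P →
      H (insert e (insert a P)) - H (insert a P) ≤ H (insert e P) - H P := by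
    intro P hP a ha haP e he heaP
    rw [hgain _ (insert_subset ha hP) e he heaP,
      hgain P hP e he fun h => heaP (mem_insert_of_mem h), hcins P a haP (hQ a ha).2.1]
    exact (hZ.add_diagonal _).shiftGain_add_diagonal_single_le (hPD.add_diagonal (hc0 P))
      (fun _ => zero_le_one) hr _ _
  exact approx_greedy_guarantee hmono hsub hk0 hε0.le (by linarith) hT0 hgreedy hTstarQ
    hTstarcard.le

/-- **Approximate greedy guarantee.** Under the grounded Laplacian setup, let `k` be a positive
integer with `k ≤ |Q|` and `0 < ε < 1/2`.  Suppose `T₀ = ∅` and, for `0 ≤ i < k`,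
`T_{i+1} = T_i ∪ {e_i}` for some `e_i ∈ Q \ T_i` with
`H(T_i ∪ {e_i}) − H(T_i) ≥ (1−ε) · max_{e ∈ Q \ T_i} (H(T_i ∪ {e}) − H(T_i))`.
Then `H(T_k) − H(∅) ≥ (1 − 1/e − ε)(H(T*) − H(∅))`, where `T*` maximizes `H` over all
subsets `P ⊆ Q` with `|P| = k`. -/
theorem stmt16 {V : Type} [Fintype V] [DecidableEq V]
    (G : SimpleGraph V) [DecidableRel G.Adj] (hconn : G.Connected)
    (F S0 S1 : Finset V)
    (hFne : F.Nonempty) (hS1ne : S1.Nonempty)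
    (hFS0 : Disjoint F S0) (hFS1 : Disjoint F S1) (hS0S1 : Disjoint S0 S1)
    (hcover : F ∪ S0 ∪ S1 = Finset.univ)
    (LF : Matrix F F ℝ)
    (hLF : LF = (G.lapMatrix ℝ).submatrix (fun i : F => (i : V)) (fun i : F => (i : V)))
    (hPD : LF.PosDef) (hnn : ∀ i j : F, 0 ≤ LF⁻¹ i j)
    (b : F → ℝ)
    (hb : ∀ i : F, b i = ((S1.filter fun a => G.Adj a (i : V)).card : ℝ))
    (Q : Finset (V × V))
    (hQ : ∀ e ∈ Q, e.1 ∈ S1 ∧ e.2 ∈ F ∧ ¬ G.Adj e.1 e.2)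
    (c : Finset (V × V) → F → ℝ)
    (hc : ∀ P, ∀ i : F, c P i = ((P.filter fun e => e.2 = (i : V)).card : ℝ))
    (H : Finset (V × V) → ℝ)
    (hH : ∀ P ⊆ Q, H P = (1 : F → ℝ) ⬝ᵥ ((LF + Matrix.diagonal (c P))⁻¹ *ᵥ (b + c P)))
    (k : ℕ) (hk0 : 0 < k) (hkQ : k ≤ Q.card)
    (ε : ℝ) (hε0 : 0 < ε) (hε : ε < 1 / 2)
    (T : ℕ → Finset (V × V)) (hT0 : T 0 = ∅)
    (hgreedy : ∀ i < k, ∃ e ∈ Q \ T i,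
        T (i + 1) = insert e (T i) ∧
        ∀ e' ∈ Q \ T i,
          (1 - ε) * (H (insert e' (T i)) - H (T i)) ≤ H (insert e (T i)) - H (T i))
    (Tstar : Finset (V × V)) (hTstarQ : Tstar ⊆ Q) (hTstarcard : Tstar.card = k)
    (hTstaropt : ∀ P ⊆ Q, P.card = k → H P ≤ H Tstar) :
    (1 - 1 / Real.exp 1 - ε) * (H Tstar - H ∅) ≤ H (T k) - H ∅ :=
  stmt16_general G F S1 hFS1 LF hLF hPD b hb Q hQ c hc H hH k hk0 ε hε0 hε T hT0 hgreedy Tstar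
    hTstarQ hTstarcard
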